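/- Let n ∈ ℝ with n < d − 1. Then there is a constant C > 0, independent of δ, such that for every 0 < δ ≤ 1/2, ∫_{Σ₀ ∩ B_δ} |x|^{−n} d_Σ x ≤ C·δ^{d−1−n}, where B_δ denotes the closed ball of radius δ centred at 0. In particular, ∫_{Σ₀ ∩ B₁} |x|^{−n} d_Σ x < ∞. -/

import Mathlib

open MeasureTheory Real
open scoped ENNReal

open Metric Set Module
open scoped NNReal RealInnerProductSpace

/-!
Near a point `a ∈ Σ₀` with `‖a‖ ≤ 1`, the lower bound `C_g ‖a‖ ≤ ‖∇ω a‖` together with the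
Lipschitz bound on `Dω` near `0` (`ω` is `C²`) shows that on the ball `B(a, c ‖a‖)` the
projection onto the hyperplane `(∇ω a)ᗮ` is injective on `Σ` with a 2-Lipschitz inverse, so this
piece of `Σ` has `(d-1)`-dimensional Hausdorff measure `≲ ‖a‖ ^ (d-1)`. A volume packing argument
covers the annulus `{r/2 ≤ ‖x‖ ≤ r}` by boundedly many such balls, hence `Σ₀` has measure
`≲ r ^ (d-1)` there, where `‖x‖ ^ (-n) ≈ r ^ (-n)`. Summing over the dyadic annuli inside `B_δ`
gives a geometric series dominated by `δ ^ (d-1-n)`.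
-/

theorem le_hausdorffMeasure_image_of_edist_le {X Y : Type*} [EMetricSpace X] [MeasurableSpace X]
    [BorelSpace X] [EMetricSpace Y] [MeasurableSpace Y] [BorelSpace Y] {f : X → Y} {K : ℝ≥0}
    {s : Set X} (hf : ∀ x ∈ s, ∀ y ∈ s, edist x y ≤ K * edist (f x) (f y)) {d : ℝ}
    (hd : 0 ≤ d) : μH[d] s ≤ (K : ℝ≥0∞) ^ d * μH[d] (f '' s) := by
  have hanti : AntilipschitzWith K (s.domRestrict f) := fun x y ↦ hf x x.2 y y.2
  have hs : μH[d] (Subtype.val '' (univ : Set s)) = μH[d] (univ : Set s) :=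
    (isometry_subtype_coe (s := s)).hausdorffMeasure_image (Or.inl hd) univ
  rw [image_univ, Subtype.range_coe] at hs
  have := hanti.le_hausdorffMeasure_image hd univ
  rwa [image_univ, range_domRestrict, ← hs] at this

section InnerProductSpace

variable {E : Type*} [NormedAddCommGroup E] [InnerProductSpace ℝ E]

/-- The constant is normalised in `EuclideanSpace ℝ (Fin m)`, so it does not depend on `E`: below,
`E` is the hyperplane `(∇ω a)ᗮ`, which moves with the base point `a`. -/
theorem hausdorffMeasure_closedBall_of_finrank_eq [FiniteDimensional ℝ E] [MeasurableSpace E]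
    [BorelSpace E] {m : ℕ} (hm : finrank ℝ E = m) (c : E) {ρ : ℝ} (hρ : 0 ≤ ρ) :
    μH[m] (closedBall c ρ) =
      ENNReal.ofReal (ρ ^ m) * μH[m] (ball (0 : EuclideanSpace ℝ (Fin m)) 1) := by
  subst hm
  let e := (stdOrthonormalBasis ℝ E).repr
  rw [← e.toIsometryEquiv.hausdorffMeasure_image, LinearIsometryEquiv.coe_toIsometryEquiv,
    e.image_closedBall, Measure.addHaar_closedBall _ _ hρ, finrank_euclideanSpace_fin]

theorem norm_le_two_mul_norm_orthogonalProjectionOnto {g v : E}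
    (h : |⟪g, v⟫| ≤ ‖g‖ / 2 * ‖v‖) : ‖v‖ ≤ 2 * ‖(ℝ ∙ g)ᗮ.orthogonalProjectionOnto v‖ := by
  have hpar : ‖(ℝ ∙ g).orthogonalProjectionOnto v‖ ≤ ‖v‖ / 2 := by
    rw [Submodule.coe_norm, ← Submodule.starProjection_apply, Submodule.starProjection_singleton,
      norm_smul]
    rcases eq_or_ne g 0 with rfl | hg
    · simp only [norm_zero, mul_zero]
      positivity
    have hg' : 0 < ‖g‖ := norm_pos_iff.2 hg
    simp only [RCLike.ofReal_real_eq_id, id_eq, Real.norm_eq_abs, abs_div, abs_pow, abs_norm]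
    rw [div_mul_eq_mul_div, div_le_iff₀ (by positivity)]
    nlinarith
  have := Submodule.norm_sq_eq_add_norm_sq_projection v (ℝ ∙ g)
  nlinarith [norm_nonneg ((ℝ ∙ g).orthogonalProjectionOnto v),
    norm_nonneg ((ℝ ∙ g)ᗮ.orthogonalProjectionOnto v), norm_nonneg v]

theorem hausdorffMeasure_le_of_abs_inner_sub_le [FiniteDimensional ℝ E] [MeasurableSpace E]
    [BorelSpace E] {m : ℕ} (hm : finrank ℝ E = m + 1) {g : E} (hg : g ≠ 0) {T : Set E} {a : E}
    {ρ : ℝ} (hρ : 0 ≤ ρ) (hT : T ⊆ closedBall a ρ)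
    (hcone : ∀ x ∈ T, ∀ y ∈ T, |⟪g, x - y⟫| ≤ ‖g‖ / 2 * ‖x - y‖) :
    μH[m] T ≤ 2 ^ m * ENNReal.ofReal (ρ ^ m) * μH[m] (ball (0 : EuclideanSpace ℝ (Fin m)) 1) := by
  have hK : finrank ℝ (ℝ ∙ g)ᗮ = m := by
    have := Submodule.finrank_add_finrank_orthogonal (ℝ ∙ g)
    rw [finrank_span_singleton hg, hm] at this
    omega
  set P := (ℝ ∙ g)ᗮ.orthogonalProjectionOnto
  have hanti : ∀ x ∈ T, ∀ y ∈ T, edist x y ≤ (2 : ℝ≥0) * edist (P x) (P y) := by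
    intro x hx y hy
    rw [edist_dist, edist_dist, dist_eq_norm, dist_eq_norm, ← map_sub,
      ← ENNReal.ofReal_coe_nnreal, ← ENNReal.ofReal_mul (by positivity)]
    exact ENNReal.ofReal_le_ofReal
      (norm_le_two_mul_norm_orthogonalProjectionOnto (hcone x hx y hy))
  have hPT : P '' T ⊆ closedBall (P a) ρ := by
    rintro _ ⟨x, hx, rfl⟩
    rw [mem_closedBall, dist_eq_norm, ← map_sub]
    exact ((ℝ ∙ g)ᗮ.norm_orthogonalProjectionOnto_apply_le (x - a)).trans
      (mem_closedBall_iff_norm.1 (hT hx))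
  calc μH[m] T ≤ ((2 : ℝ≥0) : ℝ≥0∞) ^ (m : ℝ) * μH[m] (P '' T) :=
        le_hausdorffMeasure_image_of_edist_le hanti (Nat.cast_nonneg m)
    _ ≤ 2 ^ m * μH[m] (closedBall (P a) ρ) := by
        rw [ENNReal.rpow_natCast, ENNReal.coe_ofNat]
        gcongr
    _ = _ := by rw [hausdorffMeasure_closedBall_of_finrank_eq hK _ hρ, mul_assoc]

theorem abs_inner_gradient_sub_le_of_eq [CompleteSpace E] {ω : E → ℝ} {a : E} {ρ : ℝ}
    (hω : ∀ z ∈ closedBall a ρ, DifferentiableAt ℝ ω z)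
    (hD : ∀ z ∈ closedBall a ρ, ‖fderiv ℝ ω z - fderiv ℝ ω a‖ ≤ ‖gradient ω a‖ / 2)
    {x y : E} (hx : x ∈ closedBall a ρ) (hy : y ∈ closedBall a ρ) (hxy : ω x = ω y) :
    |⟪gradient ω a, x - y⟫| ≤ ‖gradient ω a‖ / 2 * ‖x - y‖ := by
  have := (convex_closedBall a ρ).norm_image_sub_le_of_norm_fderiv_le' hω hD hy hx
  rwa [hxy, sub_self, zero_sub, norm_neg, Real.norm_eq_abs, ← inner_gradient_left] at this

end InnerProductSpace

section Packing

variable {E : Type*} [NormedAddCommGroup E] [NormedSpace ℝ E] [FiniteDimensional ℝ E]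

theorem Finset.card_mul_pow_le_of_isSeparated {N : Finset E} {x : E} {R : ℝ} {ε : ℝ≥0}
    (hR : 0 ≤ R) (hsep : IsSeparated ε (N : Set E)) (hN : (N : Set E) ⊆ closedBall x R) :
    (N.card : ℝ) * (ε / 2) ^ finrank ℝ E ≤ (R + ε / 2) ^ finrank ℝ E := by
  borelize E
  let μ : Measure E := Measure.addHaar
  have hdisj : (N : Set E).PairwiseDisjoint (fun a ↦ closedBall a (ε / 2)) := by
    intro a ha b hb hab
    apply closedBall_disjoint_closedBall
    have : (ε : ℝ≥0∞) < edist a b := hsep ha hb hab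
    rw [edist_nndist, ENNReal.coe_lt_coe, ← NNReal.coe_lt_coe, coe_nndist] at this
    linarith
  have hsub : ⋃ a ∈ N, closedBall a (ε / 2) ⊆ closedBall x (R + ε / 2) := by
    refine iUnion₂_subset fun a ha ↦ closedBall_subset_closedBall' ?_
    have := hN ha
    rw [mem_closedBall] at this
    linarith
  have hvol : (N.card : ℝ≥0∞) * ENNReal.ofReal ((ε / 2) ^ finrank ℝ E) * μ (ball 0 1) ≤
      ENNReal.ofReal ((R + ε / 2) ^ finrank ℝ E) * μ (ball 0 1) :=
    calc _ = ∑ a ∈ N, μ (closedBall a (ε / 2)) := by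
          simp [Measure.addHaar_closedBall μ _ (by positivity : (0 : ℝ) ≤ ε / 2), mul_assoc]
      _ = μ (⋃ a ∈ N, closedBall a (ε / 2)) :=
          (measure_biUnion_finset hdisj fun _ _ ↦ measurableSet_closedBall).symm
      _ ≤ μ (closedBall x (R + ε / 2)) := measure_mono hsub
      _ = _ := Measure.addHaar_closedBall μ _ (by positivity)
  rw [ENNReal.mul_le_mul_iff_left (measure_ball_pos μ _ one_pos).ne' measure_ball_lt_top.ne,
    ← ENNReal.ofReal_natCast, ← ENNReal.ofReal_mul (by positivity),
    ENNReal.ofReal_le_ofReal_iff (by positivity)] at hvol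
  exact hvol

theorem Metric.IsSeparated.encard_le_of_subset_closedBall {C : Set E} {x : E} {R : ℝ} {ε : ℝ≥0}
    (hε : 0 < ε) (hR : 0 ≤ R) (hsep : IsSeparated ε C) (hC : C ⊆ closedBall x R) :
    C.encard ≤ ⌊(2 * R / ε + 1) ^ finrank ℝ E⌋₊ := by
  set B := (2 * R / ε + 1) ^ finrank ℝ E
  by_contra! h
  obtain ⟨t, htC, htcard⟩ := exists_subset_encard_eq (Order.add_one_le_of_lt h)
  have htfin : t.Finite := finite_of_encard_eq_coe htcard
  have hcard : (htfin.toFinset.card : ℝ) = ⌊B⌋₊ + 1 := by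
    rw [htfin.encard_eq_coe_toFinset_card] at htcard
    exact_mod_cast htcard
  have := Finset.card_mul_pow_le_of_isSeparated hR (N := htfin.toFinset)
    (by simpa using hsep.subset htC) (by simpa using htC.trans hC)
  have hB : (R + ε / 2) ^ finrank ℝ E = B * (ε / 2) ^ finrank ℝ E := by
    rw [← mul_pow]
    congr 1
    field_simp
  rw [hcard, hB] at this
  have := le_of_mul_le_mul_right this (by positivity)
  linarith [Nat.lt_floor_add_one B]

theorem exists_finset_subset_cover_card_le {A : Set E} {x : E} {R ε : ℝ} (hR : 0 ≤ R)
    (hε : 0 < ε) (hA : A ⊆ closedBall x R) :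
    ∃ N : Finset E, ↑N ⊆ A ∧ A ⊆ ⋃ y ∈ N, closedBall y ε ∧
      (N.card : ℝ) ≤ (2 * R / ε + 1) ^ finrank ℝ E := by
  lift ε to ℝ≥0 using hε.le
  set B := (2 * R / ε + 1) ^ finrank ℝ E
  have hpack : packingNumber ε A ≤ ⌊B⌋₊ := iSup₂_le fun C hCA ↦ iSup_le fun hsep ↦
    hsep.encard_le_of_subset_closedBall (mod_cast hε) hR (hCA.trans hA)
  have hne : packingNumber ε A ≠ ⊤ := ne_top_of_le_ne_top (ENat.natCast_ne_top _) hpack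
  have hcard := (encard_maximalSeparatedSet hne).trans_le hpack
  have hfin : (maximalSeparatedSet ε A).Finite := finite_of_encard_le_coe hcard
  refine ⟨hfin.toFinset, by simpa using maximalSeparatedSet_subset,
    by simpa using (isCover_maximalSeparatedSet hne).subset_iUnion_closedBall, ?_⟩
  rw [hfin.encard_eq_coe_toFinset_card, Nat.cast_le] at hcard
  exact (Nat.cast_le.2 hcard).trans (Nat.floor_le (by positivity))

end Packing

theorem rpow_neg_le_two_rpow_abs_mul {r t : ℝ} (n : ℝ) (hr : 0 < r) (hrt : r / 2 ≤ t)
    (htr : t ≤ r) : t ^ (-n) ≤ 2 ^ |n| * r ^ (-n) := by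
  rcases le_or_gt 0 n with hn | hn
  · calc t ^ (-n) ≤ (r / 2) ^ (-n) := rpow_le_rpow_of_nonpos (by positivity) hrt (by linarith)
      _ = 2 ^ n * r ^ (-n) := by
        rw [div_rpow hr.le zero_le_two, rpow_neg zero_le_two, div_inv_eq_mul, mul_comm]
      _ ≤ 2 ^ |n| * r ^ (-n) := by gcongr; exacts [one_le_two, le_abs_self n]
  · calc t ^ (-n) ≤ r ^ (-n) := rpow_le_rpow (by linarith) htr (by linarith)
      _ ≤ 2 ^ |n| * r ^ (-n) :=
        le_mul_of_one_le_left (by positivity) (one_le_rpow one_le_two (abs_nonneg n))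

section Dyadic

variable {E : Type*} [NormedAddCommGroup E]

theorem closedBall_diff_singleton_subset_iUnion_annulus (δ : ℝ) :
    closedBall (0 : E) δ \ {0} ⊆ ⋃ k : ℕ, closedBall 0 (δ / 2 ^ k) \ ball 0 (δ / 2 ^ k / 2) := by
  rintro x ⟨hxδ, hx0⟩
  have hx : 0 < ‖x‖ := norm_pos_iff.2 hx0
  rw [mem_closedBall_zero_iff] at hxδ
  obtain ⟨k, hk, hk'⟩ := exists_nat_pow_near ((one_le_div hx).2 hxδ) one_lt_two
  refine mem_iUnion.2 ⟨k, ?_, ?_⟩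
  · rw [mem_closedBall_zero_iff, le_div_iff₀ (by positivity), mul_comm, ← le_div_iff₀ hx]
    exact hk
  · rw [mem_ball_zero_iff, not_lt, div_div, ← pow_succ, div_le_iff₀ (by positivity), mul_comm,
      ← div_le_iff₀ hx]
    exact hk'.le

variable [MeasurableSpace E]

theorem lintegral_inter_closedBall_le_of_annulus {μ : Measure E} {S : Set E} (h0 : (0 : E) ∉ S)
    {f : E → ℝ≥0∞} {C : ℝ≥0∞} {s : ℝ}
    (hann : ∀ r, 0 < r → r ≤ 1 →
      ∫⁻ x in S ∩ (closedBall 0 r \ ball 0 (r / 2)), f x ∂μ ≤ C * ENNReal.ofReal (r ^ s))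
    {δ : ℝ} (hδ : 0 < δ) (hδ1 : δ ≤ 1) :
    ∫⁻ x in S ∩ closedBall 0 δ, f x ∂μ ≤
      C * (1 - ENNReal.ofReal (2⁻¹ ^ s))⁻¹ * ENNReal.ofReal (δ ^ s) := by
  have hcover : S ∩ closedBall 0 δ ⊆
      ⋃ k : ℕ, S ∩ (closedBall 0 (δ / 2 ^ k) \ ball 0 (δ / 2 ^ k / 2)) := by
    rintro x ⟨hxS, hxδ⟩
    have := closedBall_diff_singleton_subset_iUnion_annulus δ
      ⟨hxδ, fun hx ↦ h0 (hx ▸ hxS)⟩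
    simpa [← inter_iUnion] using And.intro hxS this
  have hterm (k : ℕ) : ∫⁻ x in S ∩ (closedBall 0 (δ / 2 ^ k) \ ball 0 (δ / 2 ^ k / 2)), f x ∂μ ≤
      C * ENNReal.ofReal (δ ^ s) * ENNReal.ofReal (2⁻¹ ^ s) ^ k := by
    refine (hann _ (by positivity) ((div_le_self hδ.le (one_le_pow₀ one_le_two)).trans hδ1)).trans
      (le_of_eq ?_)
    rw [mul_assoc, ← ENNReal.ofReal_pow (by positivity), ← ENNReal.ofReal_mul (by positivity),
      div_rpow hδ.le (by positivity), div_eq_mul_inv, ← rpow_natCast, ← rpow_natCast,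
      ← rpow_mul zero_le_two, ← inv_rpow zero_le_two,
      ← rpow_mul (by positivity), mul_comm s]
  calc ∫⁻ x in S ∩ closedBall 0 δ, f x ∂μ
      ≤ ∑' k : ℕ, ∫⁻ x in S ∩ (closedBall 0 (δ / 2 ^ k) \ ball 0 (δ / 2 ^ k / 2)), f x ∂μ :=
        (lintegral_mono_set hcover).trans (lintegral_iUnion_le _ _)
    _ ≤ ∑' k : ℕ, C * ENNReal.ofReal (δ ^ s) * ENNReal.ofReal (2⁻¹ ^ s) ^ k :=
        ENNReal.tsum_le_tsum hterm
    _ = _ := by rw [ENNReal.tsum_mul_left, ENNReal.tsum_geometric, mul_right_comm]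

theorem lintegral_rpow_neg_annulus_le [OpensMeasurableSpace E] {μ : Measure E} {S : Set E}
    (hS : MeasurableSet S) (n : ℝ) {r : ℝ} (hr : 0 < r) :
    ∫⁻ x in S ∩ (closedBall 0 r \ ball 0 (r / 2)), ENNReal.ofReal (‖x‖ ^ (-n)) ∂μ ≤
      ENNReal.ofReal (2 ^ |n| * r ^ (-n)) * μ (S ∩ (closedBall 0 r \ ball 0 (r / 2))) := by
  rw [← setLIntegral_const]
  refine setLIntegral_mono' (hS.inter (measurableSet_closedBall.diff measurableSet_ball))
    fun x ⟨_, hxr, hxr'⟩ ↦ ENNReal.ofReal_le_ofReal ?_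
  rw [mem_closedBall_zero_iff] at hxr
  rw [mem_ball_zero_iff, not_lt] at hxr'
  exact rpow_neg_le_two_rpow_abs_mul n hr hxr' hxr

theorem exists_lintegral_rpow_neg_le_of_measure_annulus_le [OpensMeasurableSpace E]
    {μ : Measure E} {S : Set E} (hS : MeasurableSet S) (h0 : (0 : E) ∉ S) {m n : ℝ} (hnm : n < m)
    {C : ℝ≥0∞} (hC : C ≠ ⊤)
    (hann : ∀ r, 0 < r → r ≤ 1 →
      μ (S ∩ (closedBall 0 r \ ball 0 (r / 2))) ≤ C * ENNReal.ofReal (r ^ m)) :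
    ∃ A : ℝ≥0∞, A ≠ ⊤ ∧ ∀ δ, 0 < δ → δ ≤ 1 →
      ∫⁻ x in S ∩ closedBall 0 δ, ENNReal.ofReal (‖x‖ ^ (-n)) ∂μ ≤
        A * ENNReal.ofReal (δ ^ (m - n)) := by
  have hq : ENNReal.ofReal (2⁻¹ ^ (m - n)) < 1 :=
    ENNReal.ofReal_lt_one.2 (rpow_lt_one (by norm_num) (by norm_num) (by linarith))
  refine ⟨ENNReal.ofReal (2 ^ |n|) * C * (1 - ENNReal.ofReal (2⁻¹ ^ (m - n)))⁻¹, ?_,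
    fun δ hδ hδ1 ↦ lintegral_inter_closedBall_le_of_annulus h0 (fun r hr hr1 ↦ ?_) hδ hδ1⟩
  · exact ENNReal.mul_ne_top (ENNReal.mul_ne_top ENNReal.ofReal_ne_top hC)
      (ENNReal.inv_ne_top.2 (tsub_pos_of_lt hq).ne')
  calc _ ≤ ENNReal.ofReal (2 ^ |n| * r ^ (-n)) * μ (S ∩ (closedBall 0 r \ ball 0 (r / 2))) :=
        lintegral_rpow_neg_annulus_le hS n hr
    _ ≤ ENNReal.ofReal (2 ^ |n| * r ^ (-n)) * (C * ENNReal.ofReal (r ^ m)) := by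
        gcongr
        exact hann r hr hr1
    _ = ENNReal.ofReal (2 ^ |n|) * C * ENNReal.ofReal (r ^ (m - n)) := by
        rw [sub_eq_neg_add, rpow_add hr, ENNReal.ofReal_mul (by positivity),
          ENNReal.ofReal_mul (by positivity)]
        ring

end Dyadic

section ZeroSet

variable {E : Type*} [NormedAddCommGroup E] [InnerProductSpace ℝ E] [FiniteDimensional ℝ E]
  [MeasurableSpace E] [BorelSpace E] {m : ℕ} {ω : E → ℝ} {C_g : ℝ}

theorem exists_hausdorffMeasure_zeroSet_inter_closedBall_le (hm : finrank ℝ E = m + 1)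
    (hω : ContDiff ℝ 2 ω) (hCg : 0 < C_g)
    (hg : ∀ x, ω x = 0 → x ≠ 0 → ‖x‖ ≤ 1 → C_g * ‖x‖ ≤ ‖gradient ω x‖) :
    ∃ c > 0, ∃ C : ℝ≥0∞, C ≠ ⊤ ∧ ∀ a, ω a = 0 → a ≠ 0 → ‖a‖ ≤ 1 →
      μH[m] ({x | ω x = 0} ∩ closedBall a (c * ‖a‖)) ≤ C * ENNReal.ofReal (‖a‖ ^ m) := by
  obtain ⟨L, hL⟩ := ((hω.fderiv_right le_rfl).locallyLipschitz.locallyLipschitzOn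
    (s := closedBall (0 : E) 2)).exists_lipschitzOnWith_of_compact (isCompact_closedBall 0 2)
  set c := min 1 (C_g / (2 * (L + 1)))
  have hc : 0 < c := lt_min one_pos (by positivity)
  have hcL : L * c ≤ C_g / 2 := by
    have : c * (2 * (L + 1)) ≤ C_g := (le_div_iff₀ (by positivity)).1 (min_le_right _ _)
    nlinarith [L.2]
  refine ⟨c, hc, 2 ^ m * ENNReal.ofReal (c ^ m) * μH[m] (ball (0 : EuclideanSpace ℝ (Fin m)) 1),
    ENNReal.mul_ne_top (by finiteness) measure_ball_lt_top.ne, fun a ha ha0 ha1 ↦ ?_⟩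
  have hga : C_g * ‖a‖ ≤ ‖gradient ω a‖ := hg a ha ha0 ha1
  have ha' : 0 < ‖a‖ := norm_pos_iff.2 ha0
  have hball : closedBall a (c * ‖a‖) ⊆ closedBall 0 2 := by
    refine closedBall_subset_closedBall' ?_
    rw [dist_zero_right]
    nlinarith [min_le_left 1 (C_g / (2 * (L + 1)))]
  have hD : ∀ z ∈ closedBall a (c * ‖a‖),
      ‖fderiv ℝ ω z - fderiv ℝ ω a‖ ≤ ‖gradient ω a‖ / 2 := by
    intro z hz
    calc ‖fderiv ℝ ω z - fderiv ℝ ω a‖ ≤ L * ‖z - a‖ := by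
          rw [← dist_eq_norm, ← dist_eq_norm]
          exact hL.dist_le_mul _ (hball hz) _ (hball (mem_closedBall_self (by positivity)))
      _ ≤ L * (c * ‖a‖) := by gcongr; exact mem_closedBall_iff_norm.1 hz
      _ ≤ ‖gradient ω a‖ / 2 := by nlinarith
  have hcone : ∀ x ∈ {x | ω x = 0} ∩ closedBall a (c * ‖a‖),
      ∀ y ∈ {x | ω x = 0} ∩ closedBall a (c * ‖a‖),
      |⟪gradient ω a, x - y⟫| ≤ ‖gradient ω a‖ / 2 * ‖x - y‖ := fun x hx y hy ↦
    abs_inner_gradient_sub_le_of_eq (fun z _ ↦ hω.differentiable two_ne_zero z) hD hx.2 hy.2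
      (hx.1.trans hy.1.symm)
  have hgrad : gradient ω a ≠ 0 := norm_pos_iff.1 (by nlinarith)
  refine (hausdorffMeasure_le_of_abs_inner_sub_le hm hgrad (by positivity) inter_subset_right
    hcone).trans (le_of_eq ?_)
  rw [mul_pow, ENNReal.ofReal_mul (by positivity)]
  ring

theorem exists_hausdorffMeasure_zeroSet_annulus_le (hm : finrank ℝ E = m + 1)
    (hω : ContDiff ℝ 2 ω) (hCg : 0 < C_g)
    (hg : ∀ x, ω x = 0 → x ≠ 0 → ‖x‖ ≤ 1 → C_g * ‖x‖ ≤ ‖gradient ω x‖) :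
    ∃ C : ℝ≥0∞, C ≠ ⊤ ∧ ∀ r, 0 < r → r ≤ 1 →
      μH[m] ({x | ω x = 0 ∧ x ≠ 0} ∩ (closedBall 0 r \ ball 0 (r / 2))) ≤
        C * ENNReal.ofReal (r ^ m) := by
  obtain ⟨c, hc, C, hC, hloc⟩ := exists_hausdorffMeasure_zeroSet_inter_closedBall_le hm hω hCg hg
  refine ⟨ENNReal.ofReal ((4 / c + 1) ^ (m + 1)) * C, ENNReal.mul_ne_top ENNReal.ofReal_ne_top hC,
    fun r hr hr1 ↦ ?_⟩
  set S := {x | ω x = 0 ∧ x ≠ 0} ∩ (closedBall (0 : E) r \ ball 0 (r / 2))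
  have hnorm : ∀ a ∈ S, r / 2 ≤ ‖a‖ ∧ ‖a‖ ≤ r := fun a ⟨_, har, har'⟩ ↦
    ⟨by simpa using har', by simpa using har⟩
  obtain ⟨N, hNS, hcover, hcard⟩ := exists_finset_subset_cover_card_le hr.le
    (by positivity : 0 < c * r / 2) (fun x hx ↦ hx.2.1 : S ⊆ closedBall 0 r)
  rw [hm, show 2 * r / (c * r / 2) + 1 = 4 / c + 1 by field_simp; ring] at hcard
  have hcover' : S ⊆ ⋃ a ∈ N, {x | ω x = 0} ∩ closedBall a (c * ‖a‖) := by
    intro x hx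
    obtain ⟨a, ha, hxa⟩ := mem_iUnion₂.1 (hcover hx)
    refine mem_iUnion₂.2 ⟨a, ha, hx.1.1, closedBall_subset_closedBall ?_ hxa⟩
    nlinarith [(hnorm a (hNS ha)).1]
  calc μH[m] S ≤ ∑ a ∈ N, μH[m] ({x | ω x = 0} ∩ closedBall a (c * ‖a‖)) :=
        (measure_mono hcover').trans (measure_biUnion_finset_le _ _)
    _ ≤ ∑ _a ∈ N, C * ENNReal.ofReal (r ^ m) := by
        refine Finset.sum_le_sum fun a ha ↦ ?_
        obtain ⟨⟨haω, ha0⟩, -⟩ := hNS ha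
        refine (hloc a haω ha0 ((hnorm a (hNS ha)).2.trans hr1)).trans ?_
        gcongr
        exact (hnorm a (hNS ha)).2
    _ = N.card * (C * ENNReal.ofReal (r ^ m)) := by rw [Finset.sum_const, nsmul_eq_mul]
    _ ≤ _ := by
        rw [← mul_assoc, ← ENNReal.ofReal_natCast]
        gcongr

end ZeroSet

theorem statement15_general
    (d : ℕ) (hd : 2 ≤ d)
    (ω : EuclideanSpace ℝ (Fin d) → ℝ)
    (hω : ContDiff ℝ 4 ω)
    (C_g : ℝ) (hCg : 0 < C_g)
    (hg2 : ∀ x : EuclideanSpace ℝ (Fin d), ω x = 0 → x ≠ 0 → ‖x‖ ≤ 1 →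
      C_g * ‖x‖ ≤ ‖gradient ω x‖)
    (n : ℝ) (hn : n < d - 1) :
    (∃ C : ℝ, 0 < C ∧ ∀ δ : ℝ, 0 < δ → δ ≤ 1 / 2 →
      ∫⁻ x in {x : EuclideanSpace ℝ (Fin d) | ω x = 0 ∧ x ≠ 0} ∩
          Metric.closedBall 0 δ,
        ENNReal.ofReal (‖x‖ ^ (-n)) ∂(μH[(d : ℝ) - 1])
      ≤ ENNReal.ofReal (C * δ ^ ((d : ℝ) - 1 - n))) ∧
    ∫⁻ x in {x : EuclideanSpace ℝ (Fin d) | ω x = 0 ∧ x ≠ 0} ∩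
        Metric.closedBall 0 1,
      ENNReal.ofReal (‖x‖ ^ (-n)) ∂(μH[(d : ℝ) - 1]) < ⊤ := by
  obtain ⟨m, rfl⟩ : ∃ m, d = m + 1 := ⟨d - 1, by omega⟩
  have hdm : ((m + 1 : ℕ) : ℝ) - 1 = m := by push_cast; ring
  rw [hdm] at hn ⊢
  have hmeas : MeasurableSet {x : EuclideanSpace ℝ (Fin (m + 1)) | ω x = 0 ∧ x ≠ 0} :=
    (isClosed_eq hω.continuous continuous_const).measurableSet.inter
      (measurableSet_singleton 0).compl
  obtain ⟨C, hC, hann⟩ := exists_hausdorffMeasure_zeroSet_annulus_le finrank_euclideanSpace_fin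
    (hω.of_le (by norm_num)) hCg hg2
  obtain ⟨A, hA, hint⟩ :=
    exists_lintegral_rpow_neg_le_of_measure_annulus_le hmeas (fun h ↦ h.2 rfl) hn hC
      fun r hr hr1 ↦ by simpa only [rpow_natCast] using hann r hr hr1
  refine ⟨⟨A.toReal + 1, by positivity, fun δ hδ hδ2 ↦ (hint δ hδ (by linarith)).trans ?_⟩,
    (hint 1 one_pos le_rfl).trans_lt (ENNReal.mul_lt_top hA.lt_top ENNReal.ofReal_lt_top)⟩
  rw [ENNReal.ofReal_mul (by positivity)]
  gcongr
  exact (ENNReal.le_ofReal_iff_toReal_le hA (by positivity)).2 (by linarith)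

/-- Lemma 2.6(1), second assertion: for `n < d - 1` and `0 < δ ≤ 1/2`,
`∫_{Σ₀ ∩ B_δ} |x|^{-n} d_Σ x ≤ C·δ^{d-1-n}`; in particular
`∫_{Σ₀ ∩ B₁} |x|^{-n} d_Σ x < ∞`. -/
theorem statement15
    (d : ℕ) (hd : 2 ≤ d)
    (M_ω m_ω : ℝ) (hm : m_ω ≤ M_ω - 1)
    (ω : EuclideanSpace ℝ (Fin d) → ℝ)
    (hω : ContDiff ℝ 4 ω)
    (C_ω : ℝ) (hCω : 0 < C_ω)
    (hωbd : ∀ i : ℕ, i ≤ 4 → ∀ x : EuclideanSpace ℝ (Fin d),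
      ‖iteratedFDeriv ℝ i ω x‖ ≤ C_ω * (max 1 ‖x‖) ^ (M_ω - (i : ℝ)))
    (h0Sigma : ω 0 = 0)
    (hcrit0 : gradient ω 0 = 0)
    (hhess : Function.Bijective (fderiv ℝ (gradient ω) 0))
    (hnocrit : ∀ x : EuclideanSpace ℝ (Fin d), ω x = 0 → x ≠ 0 → gradient ω x ≠ 0)
    (C_g : ℝ) (hCg : 0 < C_g)
    (hg1 : ∀ x : EuclideanSpace ℝ (Fin d), ω x = 0 → x ≠ 0 → 1 ≤ ‖x‖ →
      C_g * ‖x‖ ^ m_ω ≤ ‖gradient ω x‖)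
    (hg2 : ∀ x : EuclideanSpace ℝ (Fin d), ω x = 0 → x ≠ 0 → ‖x‖ ≤ 1 →
      C_g * ‖x‖ ≤ ‖gradient ω x‖)
    (n : ℝ) (hn : n < d - 1) :
    (∃ C : ℝ, 0 < C ∧ ∀ δ : ℝ, 0 < δ → δ ≤ 1 / 2 →
      ∫⁻ x in {x : EuclideanSpace ℝ (Fin d) | ω x = 0 ∧ x ≠ 0} ∩
          Metric.closedBall 0 δ,
        ENNReal.ofReal (‖x‖ ^ (-n)) ∂(μH[(d : ℝ) - 1])
      ≤ ENNReal.ofReal (C * δ ^ ((d : ℝ) - 1 - n))) ∧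
    ∫⁻ x in {x : EuclideanSpace ℝ (Fin d) | ω x = 0 ∧ x ≠ 0} ∩
        Metric.closedBall 0 1,
      ENNReal.ofReal (‖x‖ ^ (-n)) ∂(μH[(d : ℝ) - 1]) < ⊤ :=
  statement15_general d hd ω hω C_g hCg hg2 n hn
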